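/- arXiv:math/0105259 — 4 statements merged into one kernel-verified Lean document; each statement's English description precedes it below -/
import Mathlib

section
/- Let n ≥ 3, let q be a complex number with q ≠ 0 and q ≠ ±1, and let e_i, f_i, k_i (i = 1, …, n−1) be linear endomorphisms of a complex vector space V, with each k_i invertible, satisfying the U_q(sl_n) relations. Then the operators Ĩ_i := f_i − q⁻¹ k_i e_i (i = 1, …, n−1) satisfy the U′_q(so_n) relations. -/
/-- The Cartan matrix of type `A`: `a_{ii} = 2`, `a_{i,i±1} = -1`, `a_{ij} = 0` otherwise. -/
def cartanA (i j : ℕ) : ℤ :=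
  if i = j then 2 else if i + 1 = j ∨ j + 1 = i then -1 else 0

/-- The `U_q(sl_n)` relations for operators `e i`, `f i` and invertible `k i`
(with inverses `kinv i`), `i = 1, …, n-1`, on a complex vector space. -/
def IsUqSln {V : Type*} [AddCommGroup V] [Module ℂ V] (n : ℕ) (q : ℂ)
    (e f k kinv : ℕ → Module.End ℂ V) : Prop :=
  (∀ i, 1 ≤ i → i ≤ n - 1 → k i * kinv i = 1 ∧ kinv i * k i = 1) ∧
  (∀ i j, 1 ≤ i → i ≤ n - 1 → 1 ≤ j → j ≤ n - 1 →
    (k i * k j = k j * k i) ∧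
    (k i * e j * kinv i = (q ^ cartanA i j) • e j) ∧
    (k i * f j * kinv i = (q ^ (-cartanA i j)) • f j) ∧
    (e i * f j - f j * e i =
      if i = j then (q - q⁻¹)⁻¹ • (k i - kinv i) else 0)) ∧
  (∀ i j, 1 ≤ i → i ≤ n - 1 → 1 ≤ j → j ≤ n - 1 → (i + 1 < j ∨ j + 1 < i) →
    e i * e j = e j * e i ∧ f i * f j = f j * f i) ∧
  (∀ i j, 1 ≤ i → i ≤ n - 1 → 1 ≤ j → j ≤ n - 1 → (i + 1 = j ∨ j + 1 = i) →
    (e i ^ 2 * e j - (q + q⁻¹) • (e i * e j * e i) + e j * e i ^ 2 = 0) ∧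
    (f i ^ 2 * f j - (q + q⁻¹) • (f i * f j * f i) + f j * f i ^ 2 = 0))

/-- The `U'_q(so_n)` relations for operators `I 1, …, I (n-1)` on a complex vector space:
`I_j² I_{j-1} + I_{j-1} I_j² - (q+q⁻¹) I_j I_{j-1} I_j = -I_{j-1}`,
`I_{j-1}² I_j + I_j I_{j-1}² - (q+q⁻¹) I_{j-1} I_j I_{j-1} = -I_j` for `2 ≤ j ≤ n-1`,
and `I_i I_j = I_j I_i` for `|i-j| > 1`. -/
def IsUqSon {V : Type*} [AddCommGroup V] [Module ℂ V] (n : ℕ) (q : ℂ)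
    (I : ℕ → Module.End ℂ V) : Prop :=
  (∀ j, 2 ≤ j → j ≤ n - 1 →
    (I j ^ 2 * I (j - 1) + I (j - 1) * I j ^ 2
        - (q + q⁻¹) • (I j * I (j - 1) * I j) = -I (j - 1)) ∧
    (I (j - 1) ^ 2 * I j + I j * I (j - 1) ^ 2
        - (q + q⁻¹) • (I (j - 1) * I j * I (j - 1)) = -I j)) ∧
  (∀ i j, 1 ≤ i → i ≤ n - 1 → 1 ≤ j → j ≤ n - 1 → (i + 1 < j ∨ j + 1 < i) →
    I i * I j = I j * I i)

set_option maxHeartbeats 2000000 in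
private lemma uq_comm4 {A : Type*} [Ring A] (a b c d : A)
    (h1 : a*c = c*a) (h2 : a*d = d*a) (h3 : b*c = c*b) (h4 : b*d = d*b) :
    (a*b)*(c*d) = (c*d)*(a*b) := by
  calc a*b*(c*d) = a*(b*c)*d := by noncomm_ring
    _ = a*(c*b)*d := by rw [h3]
    _ = (a*c)*(b*d) := by noncomm_ring
    _ = (c*a)*(d*b) := by rw [h1, h4]
    _ = c*(a*d)*b := by noncomm_ring
    _ = c*(d*a)*b := by rw [h2]
    _ = c*d*(a*b) := by noncomm_ring

set_option maxHeartbeats 2000000 in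
private lemma uq_swap {A : Type*} [Ring A] [Algebra ℂ A] (s t : ℂ) (a b c d : A)
    (h1 : a*c = c*a) (h2 : a*d = d*a) (h3 : b*c = c*b) (h4 : b*d = d*b) :
    (a - s•b)*(c - t•d) = (c - t•d)*(a - s•b) := by
  have e1 : (a - s•b)*(c - t•d) = a*c - t•(a*d) - s•(b*c) + (s*t)•(b*d) := by
    noncomm_ring
    match_scalars <;> ring
  have e2 : (c - t•d)*(a - s•b) = c*a - s•(c*b) - t•(d*a) + (s*t)•(d*b) := by
    noncomm_ring
    match_scalars <;> ring
  rw [e1, e2, h1, h2, h3, h4]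
  match_scalars <;> ring

set_option maxHeartbeats 0 in
private lemma uq_key {A : Type*} [Ring A] [Algebra ℂ A] (q : ℂ)
    (hq0 : q ≠ 0) (hq2 : q^2 - 1 ≠ 0) (hqq : q - q⁻¹ ≠ 0)
    (X Y K P L x y : A)
    (hxX : x*X - X*x = (q - q⁻¹)⁻¹ • (K - P))
    (hxY : x*Y = Y*x)
    (hyX : y*X = X*y)
    (hKY : K*Y = q • (Y*K))
    (hKX : K*X = (q^2)⁻¹ • (X*K))
    (hLX : L*X = q • (X*L))
    (hxK : x*K = (q^2)⁻¹ • (K*x))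
    (hxL : x*L = q • (L*x))
    (hyK : y*K = q • (K*y))
    (hyP : y*P = q⁻¹ • (P*y))
    (hLK : L*K = K*L)
    (hKP : K*P = 1)
    (hLP : L*P = P*L)
    (hsex : x^2*y - (q+q⁻¹) • (x*y*x) + y*x^2 = 0)
    (hsfx : X^2*Y - (q+q⁻¹) • (X*Y*X) + Y*X^2 = 0) :
    (X - q⁻¹ • (K*x))^2 * (Y - q⁻¹ • (L*y)) + (Y - q⁻¹ • (L*y)) * (X - q⁻¹ • (K*x))^2
      - (q+q⁻¹) • ((X - q⁻¹ • (K*x)) * (Y - q⁻¹ • (L*y)) * (X - q⁻¹ • (K*x)))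
      = -(Y - q⁻¹ • (L*y)) := by
  have h2 : (-1 + q^2 : ℂ) ≠ 0 := by intro hc; exact hq2 (by linear_combination hc)
  have h3 : (-q + q^3 : ℂ) ≠ 0 := by
    intro hc
    have hm : q * (q^2 - 1) = 0 := by linear_combination hc
    rcases mul_eq_zero.mp hm with h | h
    · exact hq0 h
    · exact hq2 h
  have h4 : (-q^2 + q^4 : ℂ) ≠ 0 := by
    intro hc
    have hm : q^2 * (q^2 - 1) = 0 := by linear_combination hc
    rcases mul_eq_zero.mp hm with h | h
    · exact hq0 (pow_eq_zero_iff (by norm_num) |>.mp h)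
    · exact hq2 h
  have zxX : (x*X - X*x - (q - q⁻¹)⁻¹ • (K - P)) = (0:A) := by
    rw [sub_eq_zero]; exact hxX
  have zxY : (x*Y - Y*x) = (0:A) := sub_eq_zero.mpr hxY
  have zyX : (y*X - X*y) = (0:A) := sub_eq_zero.mpr hyX
  have zKY : (K*Y - q • (Y*K)) = (0:A) := sub_eq_zero.mpr hKY
  have zKX : (K*X - (q^2)⁻¹ • (X*K)) = (0:A) := sub_eq_zero.mpr hKX
  have zLX : (L*X - q • (X*L)) = (0:A) := sub_eq_zero.mpr hLX
  have zxK : (x*K - (q^2)⁻¹ • (K*x)) = (0:A) := sub_eq_zero.mpr hxK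
  have zxL : (x*L - q • (L*x)) = (0:A) := sub_eq_zero.mpr hxL
  have zyK : (y*K - q • (K*y)) = (0:A) := sub_eq_zero.mpr hyK
  have zyP : (y*P - q⁻¹ • (P*y)) = (0:A) := sub_eq_zero.mpr hyP
  have zLK : (L*K - K*L) = (0:A) := sub_eq_zero.mpr hLK
  have zKP : (K*P - 1) = (0:A) := sub_eq_zero.mpr hKP
  have zLP : (L*P - P*L) = (0:A) := sub_eq_zero.mpr hLP
  have cert :
      (X - q⁻¹ • (K*x))^2 * (Y - q⁻¹ • (L*y)) + (Y - q⁻¹ • (L*y)) * (X - q⁻¹ • (K*x))^2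
        - (q+q⁻¹) • ((X - q⁻¹ • (K*x)) * (Y - q⁻¹ • (L*y)) * (X - q⁻¹ • (K*x)))
        + (Y - q⁻¹ • (L*y))
      = ((-1)/(q^3)) • (K*(x*K - (q^2)⁻¹ • (K*x))*x*L*y)
      + ((-1)/(q^5)) • (K*K*x*(x*L - q • (L*x))*y)
      + ((-1)/(q^4)) • (K*K*(x*L - q • (L*x))*x*y)
      + ((1)/(q^2)) • (K*(x*K - (q^2)⁻¹ • (K*x))*x*Y)
      + ((1)/(q^4)) • (K*K*x*(x*Y - Y*x))
      + ((1)/(q^4)) • (K*K*(x*Y - Y*x)*x)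
      + ((1)/(q^4)) • (K*(K*Y - q • (Y*K))*x*x)
      + ((1)/(q^3)) • ((K*Y - q • (Y*K))*K*x*x)
      + ((q^2 + 1)/(q^4)) • (K*(x*L - q • (L*x))*y*K*x)
      + ((q^2 + 1)/(q^3)) • (K*L*x*(y*K - q • (K*y))*x)
      + ((q^2 + 1)/(q^2)) • (K*L*(x*K - (q^2)⁻¹ • (K*x))*y*x)
      + ((q^2 + 1)/(q^4)) • (K*(L*K - K*L)*x*y*x)
      + ((-1*q^2 - 1)/(q^3)) • (K*(x*L - q • (L*x))*y*X)
      + ((-1*q^2 - 1)/(q^2)) • (K*L*x*(y*X - X*y))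
      + ((-1*q^2 - 1)/(q^2)) • (K*L*(x*X - X*x - (q - q⁻¹)⁻¹ • (K - P))*y)
      + ((-1*q^2 - 1)/(q^3 - 1*q)) • (K*(L*K - K*L)*y)
      + ((q^2 + 1)/(q^3 - 1*q)) • (K*(L*P - P*L)*y)
      + ((-1*q^2 - 1)/(q^2)) • (K*(L*X - q • (X*L))*x*y)
      + ((q^2 + 1)/(q^3 - 1*q)) • ((K*P - 1)*L*y)
      + ((-1*q^2 - 1)/(q)) • ((K*X - (q^2)⁻¹ • (X*K))*L*x*y)
      + ((1)/(q^2)) • (K*(x*X - X*x - (q - q⁻¹)⁻¹ • (K - P))*L*y)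
      + ((-1)/(q^3 - 1*q)) • ((K*P - 1)*L*y)
      + ((1)/(q^2)) • ((K*X - (q^2)⁻¹ • (X*K))*x*L*y)
      + ((-1)/(q)) • (K*(x*X - X*x - (q - q⁻¹)⁻¹ • (K - P))*Y)
      + ((-1)/(q^2 - 1)) • (K*(K*Y - q • (Y*K)))
      + ((1)/(q^2 - 1)) • ((K*P - 1)*Y)
      + ((-1)/(q)) • ((K*X - (q^2)⁻¹ • (X*K))*x*Y)
      + ((-1*q)/(q^2 - 1)) • ((K*Y - q • (Y*K))*K)
      + ((-1*q^2 - 1)/(q^3)) • (K*(x*Y - Y*x)*K*x)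
      + ((-1*q^2 - 1)/(q^3)) • ((K*Y - q • (Y*K))*x*K*x)
      + ((q^2 + 1)/(q^2)) • (K*(x*Y - Y*x)*X)
      + ((q^2 + 1)/(q^2)) • ((K*Y - q • (Y*K))*x*X)
      + ((-1)/(q^3)) • (L*(y*K - q • (K*y))*x*K*x)
      + ((-1)/(q^2)) • ((L*K - K*L)*y*x*K*x)
      + ((-1)/(q^2)) • (K*L*y*(x*K - (q^2)⁻¹ • (K*x))*x)
      + ((-1)/(q^4)) • (K*L*(y*K - q • (K*y))*x*x)
      + ((-1)/(q^3)) • (K*(L*K - K*L)*y*x*x)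
      + ((-1)/(q^3)) • (K*K*L*(x^2*y - (q+q⁻¹) • (x*y*x) + y*x^2))
      + ((1)/(q^2)) • (L*(y*K - q • (K*y))*x*X)
      + ((1)/(q)) • ((L*K - K*L)*y*x*X)
      + ((1)/(q)) • (K*L*y*(x*X - X*x - (q - q⁻¹)⁻¹ • (K - P)))
      + ((1)/(q^2 - 1)) • (K*L*(y*K - q • (K*y)))
      + ((q)/(q^2 - 1)) • (K*(L*K - K*L)*y)
      + ((-1)/(q^2 - 1)) • (K*L*(y*P - q⁻¹ • (P*y)))
      + ((-1)/(q^3 - 1*q)) • (K*(L*P - P*L)*y)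
      + ((1)/(q)) • (K*L*(y*X - X*y)*x)
      + ((1)/(q)) • (K*(L*X - q • (X*L))*y*x)
      + ((-1)/(q^3 - 1*q)) • ((K*P - 1)*L*y)
      + (1) • ((K*X - (q^2)⁻¹ • (X*K))*L*y*x)
      + ((1)/(q^2)) • (L*(y*X - X*y)*K*x)
      + ((1)/(q^2)) • ((L*X - q • (X*L))*y*K*x)
      + ((-1)/(q)) • (L*(y*X - X*y)*X)
      + ((-1)/(q)) • ((L*X - q • (X*L))*y*X)
      + ((q^2 + 1)/(q^4)) • (X*K*(x*L - q • (L*x))*y)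
      + ((-1*q^2 - 1)/(q^3)) • (X*K*(x*Y - Y*x))
      + ((-1*q^2 - 1)/(q^3)) • (X*(K*Y - q • (Y*K))*x)
      + ((-1)/(q^3)) • (X*L*(y*K - q • (K*y))*x)
      + ((-1)/(q^2)) • (X*(L*K - K*L)*y*x)
      + ((1)/(q^2)) • (X*L*(y*X - X*y))
      + ((1)/(q^2)) • (X*(L*X - q • (X*L))*y)
      + (-1) • (Y*K*(x*K - (q^2)⁻¹ • (K*x))*x)
      + (q) • (Y*K*(x*X - X*x - (q - q⁻¹)⁻¹ • (K - P)))
      + ((-1*q^2)/(q^2 - 1)) • (Y*(K*P - 1))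
      + (q) • (Y*(K*X - (q^2)⁻¹ • (X*K))*x)
      + (1) • ((X^2*Y - (q+q⁻¹) • (X*Y*X) + Y*X^2)) := by
    noncomm_ring
    match_scalars
    all_goals try field_simp
    all_goals try ring
    all_goals try field_simp
    all_goals ring
  rw [zxX, zxY, zyX, zKY, zKX, zLX, zxK, zxL, zyK, zyP, zLK, zKP, zLP, hsex, hsfx] at cert
  simp only [mul_zero, zero_mul, smul_zero, add_zero, zero_add] at cert
  exact eq_neg_of_add_eq_zero_left cert

set_option maxHeartbeats 2000000 in
/-- If `e_i, f_i, k_i` satisfy the `U_q(sl_n)` relations (with `k_i` invertible, `q ≠ 0, ±1`),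
then the operators `Ĩ_i := f_i - q⁻¹ k_i e_i` satisfy the `U'_q(so_n)` relations. -/
theorem stmt_1 {V : Type*} [AddCommGroup V] [Module ℂ V]
    (n : ℕ) (hn : 3 ≤ n) (q : ℂ) (hq0 : q ≠ 0) (hq1 : q ≠ 1) (hqm1 : q ≠ -1)
    (e f k kinv : ℕ → Module.End ℂ V)
    (h : IsUqSln n q e f k kinv) :
    IsUqSon n q (fun i => f i - q⁻¹ • (k i * e i)) := by
  obtain ⟨hk, hrel, hcom, hser⟩ := h
  have hq2 : q^2 - 1 ≠ 0 := by
    intro hc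
    rcases mul_eq_zero.mp (show (q-1)*(q+1) = 0 by linear_combination hc) with h' | h'
    · exact hq1 (by linear_combination h')
    · exact hqm1 (by linear_combination h')
  have hqq : q - q⁻¹ ≠ 0 := by
    intro hc
    have key2 : q * (q - q⁻¹) = q^2 - 1 := by
      rw [mul_sub, mul_inv_cancel₀ hq0]; ring
    exact hq2 (by rw [← key2, hc, mul_zero])
  have flip : ∀ (s : ℂ), s ≠ 0 → ∀ u v : Module.End ℂ V, u = s • v → v = s⁻¹ • u := by
    intro s hs u v huv
    rw [huv, smul_smul, inv_mul_cancel₀ hs, one_smul]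
  have hKE : ∀ i j, 1 ≤ i → i ≤ n-1 → 1 ≤ j → j ≤ n-1 →
      k i * e j = (q ^ cartanA i j) • (e j * k i) := by
    intro i j hi hi' hj hj'
    have h1 := (hrel i j hi hi' hj hj').2.1
    have h2 := (hk i hi hi').2
    calc k i * e j = k i * e j * (kinv i * k i) := by rw [h2, mul_one]
      _ = (k i * e j * kinv i) * k i := by noncomm_ring
      _ = (q ^ cartanA i j) • (e j * k i) := by rw [h1, smul_mul_assoc]
  have hKF : ∀ i j, 1 ≤ i → i ≤ n-1 → 1 ≤ j → j ≤ n-1 →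
      k i * f j = (q ^ (-cartanA i j)) • (f j * k i) := by
    intro i j hi hi' hj hj'
    have h1 := (hrel i j hi hi' hj hj').2.2.1
    have h2 := (hk i hi hi').2
    calc k i * f j = k i * f j * (kinv i * k i) := by rw [h2, mul_one]
      _ = (k i * f j * kinv i) * k i := by noncomm_ring
      _ = (q ^ (-cartanA i j)) • (f j * k i) := by rw [h1, smul_mul_assoc]
  have hEK : ∀ i j, 1 ≤ i → i ≤ n-1 → 1 ≤ j → j ≤ n-1 →
      e j * k i = (q ^ (-cartanA i j)) • (k i * e j) := by
    intro i j hi hi' hj hj'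
    have t := flip _ (zpow_ne_zero _ hq0) _ _ (hKE i j hi hi' hj hj')
    rwa [← zpow_neg] at t
  have hKinvE : ∀ i j, 1 ≤ i → i ≤ n-1 → 1 ≤ j → j ≤ n-1 →
      kinv i * e j = (q ^ (-cartanA i j)) • (e j * kinv i) := by
    intro i j hi hi' hj hj'
    calc kinv i * e j = kinv i * (e j * (k i * kinv i)) := by rw [(hk i hi hi').1, mul_one]
      _ = (kinv i * (e j * k i)) * kinv i := by noncomm_ring
      _ = (kinv i * ((q ^ (-cartanA i j)) • (k i * e j))) * kinv i := by
            rw [hEK i j hi hi' hj hj']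
      _ = (q ^ (-cartanA i j)) • ((kinv i * k i) * (e j * kinv i)) := by
            simp only [mul_smul_comm, smul_mul_assoc, mul_assoc]
      _ = (q ^ (-cartanA i j)) • (e j * kinv i) := by rw [(hk i hi hi').2, one_mul]
  have hEKinv : ∀ i j, 1 ≤ i → i ≤ n-1 → 1 ≤ j → j ≤ n-1 →
      e j * kinv i = (q ^ (cartanA i j)) • (kinv i * e j) := by
    intro i j hi hi' hj hj'
    have t := flip _ (zpow_ne_zero _ hq0) _ _ (hKinvE i j hi hi' hj hj')
    rwa [← zpow_neg, neg_neg] at t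
  have main : ∀ a b, 1 ≤ a → a ≤ n-1 → 1 ≤ b → b ≤ n-1 →
      cartanA a b = -1 → cartanA b a = -1 → (b+1 = a ∨ a+1 = b) →
      (f b - q⁻¹ • (k b * e b))^2 * (f a - q⁻¹ • (k a * e a))
        + (f a - q⁻¹ • (k a * e a)) * (f b - q⁻¹ • (k b * e b))^2
        - (q+q⁻¹) • ((f b - q⁻¹ • (k b * e b)) * (f a - q⁻¹ • (k a * e a)) * (f b - q⁻¹ • (k b * e b)))
        = -(f a - q⁻¹ • (k a * e a)) := by
    intro a b ha ha' hb hb' cab cba hadj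
    have cbb : cartanA b b = 2 := by simp [cartanA]
    have hxX : e b * f b - f b * e b = (q - q⁻¹)⁻¹ • (k b - kinv b) := by
      have t := (hrel b b hb hb' hb hb').2.2.2
      rwa [if_pos rfl] at t
    have hxY : e b * f a = f a * e b := by
      have t := (hrel b a hb hb' ha ha').2.2.2
      rw [if_neg (by omega)] at t
      exact sub_eq_zero.mp t
    have hyX : e a * f b = f b * e a := by
      have t := (hrel a b ha ha' hb hb').2.2.2
      rw [if_neg (by omega)] at t
      exact sub_eq_zero.mp t
    have hKY : k b * f a = q • (f a * k b) := by
      have t := hKF b a hb hb' ha ha'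
      rwa [cba, neg_neg, zpow_one] at t
    have hKX : k b * f b = (q^2)⁻¹ • (f b * k b) := by
      have t := hKF b b hb hb' hb hb'
      rwa [cbb, show (-(2:ℤ)) = -((2:ℕ):ℤ) by norm_num, zpow_neg, zpow_natCast] at t
    have hLX : k a * f b = q • (f b * k a) := by
      have t := hKF a b ha ha' hb hb'
      rwa [cab, neg_neg, zpow_one] at t
    have hxK : e b * k b = (q^2)⁻¹ • (k b * e b) := by
      have t := hEK b b hb hb' hb hb'
      rwa [cbb, show (-(2:ℤ)) = -((2:ℕ):ℤ) by norm_num, zpow_neg, zpow_natCast] at t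
    have hxL : e b * k a = q • (k a * e b) := by
      have t := hEK a b ha ha' hb hb'
      rwa [cab, neg_neg, zpow_one] at t
    have hyK : e a * k b = q • (k b * e a) := by
      have t := hEK b a hb hb' ha ha'
      rwa [cba, neg_neg, zpow_one] at t
    have hyP : e a * kinv b = q⁻¹ • (kinv b * e a) := by
      have t := hEKinv b a hb hb' ha ha'
      rwa [cba, show ((-1):ℤ) = -((1:ℕ):ℤ) by norm_num, zpow_neg, zpow_natCast, pow_one] at t
    have hLK : k a * k b = k b * k a := (hrel a b ha ha' hb hb').1
    have hKP : k b * kinv b = 1 := (hk b hb hb').1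
    have hLP : k a * kinv b = kinv b * k a := by
      have h1 : kinv b * k b = 1 := (hk b hb hb').2
      calc k a * kinv b = (kinv b * k b) * (k a * kinv b) := by rw [h1, one_mul]
        _ = kinv b * ((k b * k a) * kinv b) := by noncomm_ring
        _ = kinv b * ((k a * k b) * kinv b) := by rw [hLK]
        _ = (kinv b * k a) * (k b * kinv b) := by noncomm_ring
        _ = kinv b * k a := by rw [hKP, mul_one]
    have hsex := (hser b a hb hb' ha ha' hadj).1
    have hsfx := (hser b a hb hb' ha ha' hadj).2
    exact uq_key q hq0 hq2 hqq (f b) (f a) (k b) (kinv b) (k a) (e b) (e a)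
      hxX hxY hyX hKY hKX hLX hxK hxL hyK hyP hLK hKP hLP hsex hsfx
  refine ⟨?_, ?_⟩
  · intro j hj2 hjn
    have ha : 1 ≤ j - 1 := by omega
    have ha' : j - 1 ≤ n - 1 := by omega
    have hb : 1 ≤ j := by omega
    have c1 : cartanA (j-1) j = -1 := by
      unfold cartanA
      rw [if_neg (by omega), if_pos (Or.inl (by omega))]
    have c2 : cartanA j (j-1) = -1 := by
      unfold cartanA
      rw [if_neg (by omega), if_pos (Or.inr (by omega))]
    exact ⟨main (j-1) j ha ha' hb hjn c1 c2 (Or.inr (by omega)),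
           main j (j-1) hb hjn ha ha' c2 c1 (Or.inl (by omega))⟩
  · intro i j hi hi' hj hj' hfar
    have cij : cartanA i j = 0 := by
      unfold cartanA
      rw [if_neg (by omega), if_neg (by omega)]
    have cji : cartanA j i = 0 := by
      unfold cartanA
      rw [if_neg (by omega), if_neg (by omega)]
    have cee := (hcom i j hi hi' hj hj' hfar).1
    have cff := (hcom i j hi hi' hj hj' hfar).2
    have cef : e i * f j = f j * e i := by
      have t := (hrel i j hi hi' hj hj').2.2.2
      rw [if_neg (by omega)] at t
      exact sub_eq_zero.mp t
    have cfe : e j * f i = f i * e j := by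
      have t := (hrel j i hj hj' hi hi').2.2.2
      rw [if_neg (by omega)] at t
      exact sub_eq_zero.mp t
    have cke : k i * e j = e j * k i := by
      have t := hKE i j hi hi' hj hj'
      rwa [cij, zpow_zero, one_smul] at t
    have cek : k j * e i = e i * k j := by
      have t := hKE j i hj hj' hi hi'
      rwa [cji, zpow_zero, one_smul] at t
    have ckf : k i * f j = f j * k i := by
      have t := hKF i j hi hi' hj hj'
      rwa [cij, neg_zero, zpow_zero, one_smul] at t
    have cfk : k j * f i = f i * k j := by
      have t := hKF j i hj hj' hi hi'
      rwa [cji, neg_zero, zpow_zero, one_smul] at t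
    have ckk : k i * k j = k j * k i := (hrel i j hi hi' hj hj').1
    have hAD : f i * (k j * e j) = (k j * e j) * f i := by
      calc f i * (k j * e j) = (f i * k j) * e j := by rw [mul_assoc]
        _ = (k j * f i) * e j := by rw [cfk]
        _ = k j * (f i * e j) := by rw [mul_assoc]
        _ = k j * (e j * f i) := by rw [← cfe]
        _ = (k j * e j) * f i := by rw [mul_assoc]
    have hBC : (k i * e i) * f j = f j * (k i * e i) := by
      calc (k i * e i) * f j = k i * (e i * f j) := by rw [mul_assoc]
        _ = k i * (f j * e i) := by rw [cef]
        _ = (k i * f j) * e i := by rw [mul_assoc]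
        _ = (f j * k i) * e i := by rw [ckf]
        _ = f j * (k i * e i) := by rw [mul_assoc]
    have hBD : (k i * e i) * (k j * e j) = (k j * e j) * (k i * e i) :=
      uq_comm4 (k i) (e i) (k j) (e j) ckk cke cek.symm cee
    exact uq_swap q⁻¹ q⁻¹ (f i) (k i * e i) (f j) (k j * e j) cff hAD hBC hBD
end

section
/- Let p be a complex number with p ≠ 0 and p⁴ ≠ 1, set q = p², and let μ ∈ ℤ represent the half-integer m = μ/2, so that q^m := p^μ and the q-number [m±1] := (p^{μ±2} − p^{−μ∓2})/(q − q⁻¹). Let M be the linear endomorphism of ℂ² (standard basis e₁, e₂) given by M e₁ = i q [m] e₁ − p e₂ and M e₂ = i q⁻¹ [m] e₂ + p⁻¹ e₁, where [m] = (p^μ − p^{−μ})/(q − q⁻¹) and i is the imaginary unit. Then the vectors v_+ := −i p^{μ−1} e₁ + e₂ and v_− := i p^{−μ−1} e₁ + e₂ satisfy M v_+ = i [m+1] v_+ and M v_− = i [m−1] v_−. Moreover, if p^{2μ} ≠ −1 then v_+ and v_− form a basis of ℂ², so the tensor product of the vector representation of U′_q(so_2) with the one-dimensional representation T_m decomposes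 as T_{m+1} ⊕ T_{m−1}. -/
/-- The standard basis vector `e_k` of `ℂ²`. -/
noncomputable def e2 (k : Fin 2) : Fin 2 → ℂ := Pi.single k 1

/-- The `q`-number `[m] = (p^μ - p^{-μ})/(q - q⁻¹)` where `q = p²`, `p = q^{1/2}` and
`μ = 2m` represents the half-integer `m = μ/2`. -/
noncomputable def qnumC (p : ℂ) (μ : ℤ) : ℂ :=
  (p ^ μ - p ^ (-μ)) / (p ^ 2 - (p ^ 2)⁻¹)

set_option maxHeartbeats 1000000 in
/-- **Decomposition of the vector ⊗ classical-type representation of `U'_q(so_2)`.**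
Let `q = p²` (`p ≠ 0`, `p⁴ ≠ 1`) and `m = μ/2` a half-integer.  Let `M` be the tensor-product
action `T⊗(I_{21})` on `ℂ²`: `M e₁ = i q [m] e₁ - q^{1/2} e₂`,
`M e₂ = i q⁻¹ [m] e₂ + q^{-1/2} e₁`.  Then `v₊ = -i q^{m-1/2} e₁ + e₂` and
`v₋ = i q^{-m-1/2} e₁ + e₂` satisfy `M v₊ = i [m+1] v₊`, `M v₋ = i [m-1] v₋`, and if
`q^{2m} ≠ -1` they form a basis of `ℂ²`; hence `T_𝟏 ⊗ T_m = T_{m+1} ⊕ T_{m-1}`. -/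
theorem stmt_8 (p : ℂ) (hp : p ≠ 0) (hp4 : p ^ 4 ≠ 1) (μ : ℤ)
    (M : Module.End ℂ (Fin 2 → ℂ))
    (hM1 : M (e2 0) = (Complex.I * p ^ 2 * qnumC p μ) • e2 0 + (-p) • e2 1)
    (hM2 : M (e2 1) = (Complex.I * (p ^ 2)⁻¹ * qnumC p μ) • e2 1 + p⁻¹ • e2 0) :
    M ((-Complex.I * p ^ (μ - 1)) • e2 0 + e2 1)
      = (Complex.I * qnumC p (μ + 2)) • ((-Complex.I * p ^ (μ - 1)) • e2 0 + e2 1) ∧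
    M ((Complex.I * p ^ (-μ - 1)) • e2 0 + e2 1)
      = (Complex.I * qnumC p (μ - 2)) • ((Complex.I * p ^ (-μ - 1)) • e2 0 + e2 1) ∧
    (p ^ (2 * μ) ≠ -1 →
      LinearIndependent ℂ
        ![(-Complex.I * p ^ (μ - 1)) • e2 0 + e2 1,
          (Complex.I * p ^ (-μ - 1)) • e2 0 + e2 1] ∧
      Submodule.span ℂ
        {(-Complex.I * p ^ (μ - 1)) • e2 0 + e2 1,
         (Complex.I * p ^ (-μ - 1)) • e2 0 + e2 1} = (⊤ : Submodule ℂ (Fin 2 → ℂ))) := by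
  set I := Complex.I with hIdef
  have hI : I ^ 2 = -1 := Complex.I_sq
  have h4 : p ^ 4 - 1 ≠ 0 := sub_ne_zero_of_ne hp4
  set x : ℂ := p ^ μ with hxdef
  have hx : x ≠ 0 := zpow_ne_zero _ hp
  have hD : p ^ 2 - (p ^ 2)⁻¹ = (p ^ 4 - 1) / p ^ 2 := by field_simp
  have hxm : p ^ (μ - 1) = x / p := by
    rw [zpow_sub₀ hp, zpow_one]
  have hxm' : p ^ (-μ - 1) = x⁻¹ / p := by
    rw [zpow_sub₀ hp, zpow_one, zpow_neg]
  have hQ0 : qnumC p μ = (x - x⁻¹) * p ^ 2 / (p ^ 4 - 1) := by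
    rw [qnumC, zpow_neg, hD, div_div_eq_mul_div]
  have hxp : p ^ (μ + 2) = x * p ^ 2 := by
    rw [zpow_add₀ hp, hxdef]; norm_num
  have hxp' : p ^ (-(μ + 2)) = x⁻¹ * (p ^ 2)⁻¹ := by
    rw [zpow_neg, hxp, mul_inv]
  have hxq : p ^ (μ - 2) = x * (p ^ 2)⁻¹ := by
    rw [zpow_sub₀ hp, hxdef, div_eq_mul_inv]; norm_num
  have hxq' : p ^ (-(μ - 2)) = x⁻¹ * p ^ 2 := by
    rw [zpow_neg, hxq, mul_inv, inv_inv]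
  have hQp : qnumC p (μ + 2) = (x * p ^ 2 - x⁻¹ * (p ^ 2)⁻¹) * p ^ 2 / (p ^ 4 - 1) := by
    rw [qnumC, hD, div_div_eq_mul_div, hxp, hxp']
  have hQm : qnumC p (μ - 2) = (x * (p ^ 2)⁻¹ - x⁻¹ * p ^ 2) * p ^ 2 / (p ^ 4 - 1) := by
    rw [qnumC, hD, div_div_eq_mul_div, hxq, hxq']
  refine ⟨?_, ?_, ?_⟩
  · rw [map_add, map_smul, hM1, hM2, hQ0, hQp, hxm]
    match_scalars
    · have hne : x * p ^ 2 * (p ^ 4 - 1) * p ≠ 0 :=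
        mul_ne_zero (mul_ne_zero (mul_ne_zero hx (pow_ne_zero 2 hp)) h4) hp
      field_simp
      linear_combination (p ^ 4 - 1) * hI
    · field_simp
      ring
  · rw [map_add, map_smul, hM1, hM2, hQ0, hQm, hxm']
    match_scalars
    · have hne : p ^ 2 * x * (p ^ 4 - 1) * (x * p) ≠ 0 :=
        mul_ne_zero (mul_ne_zero (mul_ne_zero (pow_ne_zero 2 hp) hx) h4) (mul_ne_zero hx hp)
      field_simp
      linear_combination (p ^ 4 * x ^ 2 - x ^ 2) * hI
    · field_simp
      ring
  · intro h2μ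
    have hx2 : x ^ 2 + 1 ≠ 0 := by
      intro h
      apply h2μ
      have : x ^ 2 = -1 := by linear_combination h
      rw [two_mul, zpow_add₀ hp, ← hxdef, ← sq, this]
    have hli : LinearIndependent ℂ
        ![(-I * p ^ (μ - 1)) • e2 0 + e2 1, (I * p ^ (-μ - 1)) • e2 0 + e2 1] := by
      rw [LinearIndependent.pair_iff]
      intro s t hst
      have h0 := congrFun hst 0
      have h1 := congrFun hst 1
      simp [e2, Pi.single_apply] at h0 h1
      rw [hxm, hxm'] at h0
      have ht : t = -s := by linear_combination h1
      rw [ht] at h0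
      have hs : s = 0 := by
        by_contra hs0
        apply hx2
        have hpne : (p : ℂ) ≠ 0 := hp
        have hIne : I ≠ 0 := Complex.I_ne_zero
        field_simp at h0
        have hne : s * I * p ≠ 0 := mul_ne_zero (mul_ne_zero hs0 hIne) hp
        have h' : s * I * p * (x ^ 2 + 1) = 0 := by linear_combination (-p) * h0
        exact (mul_eq_zero.mp h').resolve_left hne
      exact ⟨hs, by rw [ht, hs, neg_zero]⟩
    refine ⟨hli, ?_⟩
    have hspan := hli.span_eq_top_of_card_eq_finrank (by simp)
    rw [← hspan]
    congr 1
    ext y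
    simp [Fin.exists_fin_two, or_comm, eq_comm]
end

section
/- Let q be a real number with q > 1, and let l be a nonnegative half-integer (2l ∈ ℤ≥0). On the complex vector space with basis |l,m⟩ for m ∈ {−l, −l+1, …, l}, define operators J₁ and J₂ by J₁ |l,m⟩ = i [m] |l,m⟩ and J₂ |l,m⟩ = A_{l,m} |l,m+1⟩ − A_{l,m−1} |l,m−1⟩, where [a] := (q^a − q^{−a})/(q − q⁻¹) (real powers of q), d_m := ((q^m + q^{−m})(q^{m+1} + q^{−m−1}))^{−1/2}, A_{l,m} := d_m ([l−m][l+m+1])^{1/2} (real square roots; terms |l,m±1⟩ with |m±1| > l are zero, as are their coefficients). Then J₁² J₂ + J₂ J₁² − (q+q⁻¹) J₁ J₂ J₁ = −J₂ and J₂² J₁ + J₁ J₂² − (q+q⁻¹) J₂ J₁ J₂ = −J₁; that is, these operators define the classical type irreducible representation T_l of U′_q(so_3). -/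
/-- The `q`-number `[a] = (q^a - q^{-a})/(q - q⁻¹)` (real powers of `q`). -/
noncomputable def qn (q a : ℝ) : ℝ := (q ^ a - q ^ (-a)) / (q - q⁻¹)

/-- `d_m = ((q^m + q^{-m})(q^{m+1} + q^{-m-1}))^{-1/2}`. -/
noncomputable def dd (q m : ℝ) : ℝ :=
  ((q ^ m + q ^ (-m)) * (q ^ (m + 1) + q ^ (-(m + 1)))) ^ (-(1 / 2 : ℝ))

/-- `A_{l,m} = d_m ([l-m][l+m+1])^{1/2}`. -/
noncomputable def AA (q l m : ℝ) : ℝ :=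
  dd q m * Real.sqrt (qn q (l - m) * qn q (l + m + 1))

/-- The basis vector of `Fin N → ℂ` with `ℤ`-valued index; out-of-range indices give `0`.
For the classical type representation `T_l` of `U'_q(so_3)` with `l = lam/2`, the index
`t ∈ {0, …, lam}` corresponds to the Gel'fand–Tsetlin vector `|l, m⟩` with `m = t - l`. -/
noncomputable def bz (N : ℕ) (t : ℤ) : Fin N → ℂ :=
  if h : 0 ≤ t ∧ t < N then Pi.single (⟨t.toNat, by omega⟩ : Fin N) 1 else 0

section Aux

variable {q : ℝ}

lemma uq3_hu_ne (hq : 1 < q) : q - q⁻¹ ≠ 0 := by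
  have h0 : 0 < q := lt_trans one_pos hq
  have : q⁻¹ < 1 := inv_lt_one_of_one_lt₀ hq
  nlinarith

lemma uq3_qn_mul (hq : 1 < q) (a : ℝ) :
    qn q a * (q - q⁻¹) = q ^ a - (q ^ a)⁻¹ := by
  have hq0 : 0 < q := lt_trans one_pos hq
  rw [qn, div_mul_cancel₀ _ (uq3_hu_ne hq), Real.rpow_neg hq0.le]

lemma uq3_qn_nonneg (hq : 1 < q) {a : ℝ} (ha : 0 ≤ a) : 0 ≤ qn q a := by
  have hq0 : 0 < q := lt_trans one_pos hq
  have h1 : q ^ (-a) ≤ q ^ a := by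
    rw [Real.rpow_le_rpow_left_iff hq]; linarith
  have h2 : q⁻¹ < q := lt_trans (inv_lt_one_of_one_lt₀ hq) hq
  exact div_nonneg (by linarith) (by linarith)

lemma uq3_qn_zero : qn q 0 = 0 := by simp [qn]

lemma uq3_L1 (hq : 1 < q) (m : ℝ) :
    qn q (m+1)^2 + qn q m^2 - (q+q⁻¹) * qn q m * qn q (m+1) = 1 := by
  have hq0 : 0 < q := lt_trans one_pos hq
  have hq0' : q ≠ 0 := hq0.ne'
  have hu := uq3_hu_ne hq
  have hx : q ^ m ≠ 0 := (Real.rpow_pos_of_pos hq0 m).ne'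
  have hY := uq3_qn_mul hq (m+1)
  rw [Real.rpow_add hq0, Real.rpow_one] at hY
  have hX := uq3_qn_mul hq m
  have hP : (q^m*q - (q^m*q)⁻¹)^2 + (q^m - (q^m)⁻¹)^2
      - (q+q⁻¹)*(q^m - (q^m)⁻¹)*(q^m*q - (q^m*q)⁻¹) = (q-q⁻¹)^2 := by
    field_simp; ring
  apply mul_right_cancel₀ (pow_ne_zero 2 hu)
  rw [one_mul]
  calc (qn q (m+1)^2 + qn q m^2 - (q+q⁻¹) * qn q m * qn q (m+1)) * (q-q⁻¹)^2
      = (qn q (m+1)*(q-q⁻¹))^2 + (qn q m*(q-q⁻¹))^2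
        - (q+q⁻¹)*(qn q m*(q-q⁻¹))*(qn q (m+1)*(q-q⁻¹)) := by ring
    _ = (q-q⁻¹)^2 := by rw [hY, hX]; exact hP

lemma uq3_L2 (hq : 1 < q) (m : ℝ) :
    qn q m + qn q (m+2) = (q+q⁻¹) * qn q (m+1) := by
  have hq0 : 0 < q := lt_trans one_pos hq
  have hq0' : q ≠ 0 := hq0.ne'
  have hu := uq3_hu_ne hq
  have hx : q ^ m ≠ 0 := (Real.rpow_pos_of_pos hq0 m).ne'
  have hX := uq3_qn_mul hq m
  have hY := uq3_qn_mul hq (m+1)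
  rw [Real.rpow_add hq0, Real.rpow_one] at hY
  have hZ := uq3_qn_mul hq (m+2)
  rw [show q ^ (m+2) = q^m*q*q by
    rw [show m+2 = m+1+1 by ring, Real.rpow_add hq0, Real.rpow_add hq0,
      Real.rpow_one]] at hZ
  have hP : (q^m - (q^m)⁻¹) + (q^m*q*q - (q^m*q*q)⁻¹)
      = (q+q⁻¹) * (q^m*q - (q^m*q)⁻¹) := by
    field_simp; ring
  apply mul_right_cancel₀ hu
  calc (qn q m + qn q (m+2)) * (q-q⁻¹)
      = qn q m * (q-q⁻¹) + qn q (m+2) * (q-q⁻¹) := by ring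
    _ = (q+q⁻¹) * (qn q (m+1) * (q - q⁻¹)) := by rw [hX, hZ, hY]; exact hP
    _ = (q+q⁻¹) * qn q (m+1) * (q-q⁻¹) := by ring

lemma uq3_E1 (hq : 1 < q) (m : ℝ) :
    2 * qn q m - (q+q⁻¹) * qn q (m+1) = -(q ^ (m+1) + q ^ (-(m+1))) := by
  have hq0 : 0 < q := lt_trans one_pos hq
  have hq0' : q ≠ 0 := hq0.ne'
  have hu := uq3_hu_ne hq
  have hx : q ^ m ≠ 0 := (Real.rpow_pos_of_pos hq0 m).ne'
  have hX := uq3_qn_mul hq m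
  have hY := uq3_qn_mul hq (m+1)
  rw [Real.rpow_add hq0, Real.rpow_one] at hY
  have hP : 2*(q^m - (q^m)⁻¹) - (q+q⁻¹)*(q^m*q - (q^m*q)⁻¹)
      = -(q^m*q + (q^m*q)⁻¹) * (q-q⁻¹) := by
    field_simp; ring
  apply mul_right_cancel₀ hu
  calc (2 * qn q m - (q+q⁻¹) * qn q (m+1)) * (q-q⁻¹)
      = 2*(qn q m*(q-q⁻¹)) - (q+q⁻¹)*(qn q (m+1)*(q-q⁻¹)) := by ring
    _ = -(q^m*q + (q^m*q)⁻¹) * (q-q⁻¹) := by rw [hX, hY]; exact hP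
    _ = -(q ^ (m+1) + q ^ (-(m+1))) * (q-q⁻¹) := by
        rw [Real.rpow_neg hq0.le, Real.rpow_add hq0, Real.rpow_one]

lemma uq3_E2 (hq : 1 < q) (m : ℝ) :
    2 * qn q m - (q+q⁻¹) * qn q (m-1) = q ^ (m-1) + q ^ (-(m-1)) := by
  have hq0 : 0 < q := lt_trans one_pos hq
  have hq0' : q ≠ 0 := hq0.ne'
  have hu := uq3_hu_ne hq
  have hx : q ^ m ≠ 0 := (Real.rpow_pos_of_pos hq0 m).ne'
  have hX := uq3_qn_mul hq m
  have hY := uq3_qn_mul hq (m-1)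
  rw [show q ^ (m-1) = q^m*q⁻¹ by
    rw [show m-1 = m + (-1) by ring, Real.rpow_add hq0, Real.rpow_neg_one]] at hY
  have hP : 2*(q^m - (q^m)⁻¹) - (q+q⁻¹)*(q^m*q⁻¹ - (q^m*q⁻¹)⁻¹)
      = (q^m*q⁻¹ + (q^m*q⁻¹)⁻¹) * (q-q⁻¹) := by
    field_simp; ring
  apply mul_right_cancel₀ hu
  calc (2 * qn q m - (q+q⁻¹) * qn q (m-1)) * (q-q⁻¹)
      = 2*(qn q m*(q-q⁻¹)) - (q+q⁻¹)*(qn q (m-1)*(q-q⁻¹)) := by ring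
    _ = (q^m*q⁻¹ + (q^m*q⁻¹)⁻¹) * (q-q⁻¹) := by rw [hX, hY]; exact hP
    _ = (q ^ (m-1) + q ^ (-(m-1))) * (q-q⁻¹) := by
        rw [Real.rpow_neg hq0.le, show q ^ (m-1) = q^m*q⁻¹ by
          rw [show m-1 = m + (-1) by ring, Real.rpow_add hq0, Real.rpow_neg_one]]

lemma uq3_L4 (hq : 1 < q) (l m : ℝ) :
    qn q (l-m+1) * qn q (l+m) - qn q (l-m) * qn q (l+m+1)
      = qn q m * (q ^ m + q ^ (-m)) := by
  have hq0 : 0 < q := lt_trans one_pos hq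
  have hq0' : q ≠ 0 := hq0.ne'
  have hu := uq3_hu_ne hq
  have hx : q ^ m ≠ 0 := (Real.rpow_pos_of_pos hq0 m).ne'
  have hy : q ^ l ≠ 0 := (Real.rpow_pos_of_pos hq0 l).ne'
  have hA := uq3_qn_mul hq (l-m+1)
  rw [show q ^ (l-m+1) = q^l*(q^m)⁻¹*q by
    rw [show l-m+1 = l + (-m) + 1 by ring, Real.rpow_add hq0, Real.rpow_add hq0,
      Real.rpow_one, Real.rpow_neg hq0.le]] at hA
  have hB := uq3_qn_mul hq (l+m)
  rw [Real.rpow_add hq0] at hB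
  have hC := uq3_qn_mul hq (l-m)
  rw [show q ^ (l-m) = q^l*(q^m)⁻¹ by
    rw [show l-m = l + (-m) by ring, Real.rpow_add hq0, Real.rpow_neg hq0.le]] at hC
  have hD := uq3_qn_mul hq (l+m+1)
  rw [Real.rpow_add hq0, Real.rpow_add hq0, Real.rpow_one] at hD
  have hX := uq3_qn_mul hq m
  have hP : (q^l*(q^m)⁻¹*q - (q^l*(q^m)⁻¹*q)⁻¹) * (q^l*q^m - (q^l*q^m)⁻¹)
      - (q^l*(q^m)⁻¹ - (q^l*(q^m)⁻¹)⁻¹) * (q^l*q^m*q - (q^l*q^m*q)⁻¹)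
      = (q^m - (q^m)⁻¹) * (q^m + (q^m)⁻¹) * (q-q⁻¹) := by
    field_simp; ring
  apply mul_right_cancel₀ (pow_ne_zero 2 hu)
  calc (qn q (l-m+1) * qn q (l+m) - qn q (l-m) * qn q (l+m+1)) * (q-q⁻¹)^2
      = (qn q (l-m+1)*(q-q⁻¹)) * (qn q (l+m)*(q-q⁻¹))
        - (qn q (l-m)*(q-q⁻¹)) * (qn q (l+m+1)*(q-q⁻¹)) := by ring
    _ = (q^m - (q^m)⁻¹) * (q^m + (q^m)⁻¹) * (q-q⁻¹) := by
        rw [hA, hB, hC, hD]; exact hP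
    _ = (qn q m * (q-q⁻¹)) * (q^m + (q^m)⁻¹) * (q-q⁻¹) := by rw [hX]
    _ = qn q m * (q ^ m + q ^ (-m)) * (q-q⁻¹)^2 := by
        rw [Real.rpow_neg hq0.le]; ring

lemma uq3_Asq (hq : 1 < q) {l m : ℝ} (h1 : 0 ≤ l - m) (h2 : 0 ≤ l + m + 1) :
    (AA q l m)^2 * ((q ^ m + q ^ (-m)) * (q ^ (m+1) + q ^ (-(m+1))))
      = qn q (l-m) * qn q (l+m+1) := by
  have hq0 : 0 < q := lt_trans one_pos hq
  have hP : 0 < (q ^ m + q ^ (-m)) * (q ^ (m+1) + q ^ (-(m+1))) := by positivity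
  have hd : dd q m ^ 2
      = ((q ^ m + q ^ (-m)) * (q ^ (m+1) + q ^ (-(m+1))))⁻¹ := by
    rw [dd, sq, ← Real.rpow_add hP, show -(1/2:ℝ) + -(1/2) = -1 by norm_num,
      Real.rpow_neg_one]
  have hs : Real.sqrt (qn q (l-m) * qn q (l+m+1)) ^ 2
      = qn q (l-m) * qn q (l+m+1) :=
    Real.sq_sqrt (mul_nonneg (uq3_qn_nonneg hq h1) (uq3_qn_nonneg hq h2))
  rw [AA, mul_pow, hd, hs]
  field_simp

lemma uq3_L3 (hq : 1 < q) {l m : ℝ} (h1 : 0 ≤ l - m) (h2 : 0 ≤ l + m) :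
    (AA q l m)^2 * (2*qn q m - (q+q⁻¹)*qn q (m+1))
      + (AA q l (m-1))^2 * (2*qn q m - (q+q⁻¹)*qn q (m-1)) = qn q m := by
  have hq0 : 0 < q := lt_trans one_pos hq
  have hS : 0 < q ^ m + q ^ (-m) := by positivity
  have hA := uq3_Asq hq (l := l) (m := m) h1 (by linarith)
  have hA' := uq3_Asq hq (l := l) (m := m-1) (by linarith : (0:ℝ) ≤ l - (m-1))
    (by linarith : (0:ℝ) ≤ l + (m-1) + 1)
  rw [show m-1+1 = m by ring, show l-(m-1) = l-m+1 by ring,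
    show l+(m-1)+1 = l+m by ring] at hA'
  have hE1 := uq3_E1 hq m
  have hE2 := uq3_E2 hq m
  have hL4 := uq3_L4 hq l m
  apply mul_right_cancel₀ (ne_of_gt hS)
  linear_combination (AA q l m)^2 * (q^m+q^(-m)) * hE1
    + (AA q l (m-1))^2 * (q^m+q^(-m)) * hE2 - hA + hA' + hL4

/-- `AA` vanishes when `l - m = 0`. -/
lemma uq3_AA_zero_left {l m : ℝ} (h : l - m = 0) : AA q l m = 0 := by
  rw [AA, h, uq3_qn_zero, zero_mul, Real.sqrt_zero, mul_zero]

/-- `AA` vanishes when `l + m + 1 = 0`. -/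
lemma uq3_AA_zero_right {l m : ℝ} (h : l + m + 1 = 0) : AA q l m = 0 := by
  rw [AA, h, uq3_qn_zero, mul_zero, Real.sqrt_zero, mul_zero]

end Aux

/-- Complex diagonal coefficient. -/
noncomputable def Cz (q : ℝ) (lam : ℕ) (t : ℤ) : ℂ :=
  Complex.I * ((qn q ((t : ℝ) - (lam : ℝ) / 2) : ℝ) : ℂ)

/-- Complex off-diagonal coefficient. -/
noncomputable def Az (q : ℝ) (lam : ℕ) (t : ℤ) : ℂ :=
  ((AA q ((lam : ℝ) / 2) ((t : ℝ) - (lam : ℝ) / 2) : ℝ) : ℂ)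

lemma uq3_KC {q : ℝ} (hq : 1 < q) (lam : ℕ) (s : ℤ) :
    Cz q lam (s+1)^2 + Cz q lam s^2
      - ((q + q⁻¹ : ℝ) : ℂ) * Cz q lam s * Cz q lam (s+1) = -1 := by
  have hr := uq3_L1 hq ((s : ℝ) - (lam : ℝ)/2)
  have hc := congrArg (Complex.ofReal) hr
  push_cast at hc
  simp only [Cz]
  rw [show ((s+1 : ℤ) : ℝ) - (lam : ℝ)/2 = ((s : ℝ) - (lam : ℝ)/2) + 1 by
    push_cast; ring]
  push_cast
  linear_combination (Complex.I^2) * hc + Complex.I_sq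

lemma uq3_KC2 {q : ℝ} (hq : 1 < q) (lam : ℕ) (s : ℤ) :
    Cz q lam s + Cz q lam (s+2) - ((q + q⁻¹ : ℝ) : ℂ) * Cz q lam (s+1) = 0 := by
  have hr := uq3_L2 hq ((s : ℝ) - (lam : ℝ)/2)
  have hc := congrArg (Complex.ofReal) hr
  push_cast at hc
  simp only [Cz]
  rw [show ((s+1 : ℤ) : ℝ) - (lam : ℝ)/2 = ((s : ℝ) - (lam : ℝ)/2) + 1 by
    push_cast; ring,
    show ((s+2 : ℤ) : ℝ) - (lam : ℝ)/2 = ((s : ℝ) - (lam : ℝ)/2) + 2 by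
    push_cast; ring]
  push_cast
  linear_combination Complex.I * hc

lemma uq3_KA {q : ℝ} (hq : 1 < q) (lam : ℕ) (s : ℤ) (hs0 : 0 ≤ s)
    (hs1 : s ≤ lam) :
    Az q lam s^2 * (2 * Cz q lam s - ((q + q⁻¹ : ℝ) : ℂ) * Cz q lam (s+1))
      + Az q lam (s-1)^2
        * (2 * Cz q lam s - ((q + q⁻¹ : ℝ) : ℂ) * Cz q lam (s-1))
      = Cz q lam s := by
  have hsr : (s : ℝ) ≤ (lam : ℝ) := by exact_mod_cast hs1
  have hsr0 : (0 : ℝ) ≤ (s : ℝ) := by exact_mod_cast hs0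
  have hr := uq3_L3 hq (l := (lam : ℝ)/2) (m := (s : ℝ) - (lam : ℝ)/2)
    (by linarith) (by linarith)
  have hc := congrArg (Complex.ofReal) hr
  push_cast at hc
  simp only [Az, Cz]
  rw [show ((s+1 : ℤ) : ℝ) - (lam : ℝ)/2 = ((s : ℝ) - (lam : ℝ)/2) + 1 by
    push_cast; ring,
    show ((s-1 : ℤ) : ℝ) - (lam : ℝ)/2 = ((s : ℝ) - (lam : ℝ)/2) - 1 by
    push_cast; ring]
  push_cast
  linear_combination Complex.I * hc

lemma bz_coe (N : ℕ) (i : Fin N) : bz N (i : ℤ) = Pi.single i 1 := by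
  rw [bz, dif_pos ⟨Int.natCast_nonneg _, by exact_mod_cast i.isLt⟩]
  simp

lemma bz_out {N : ℕ} {t : ℤ} (h : t < 0 ∨ (N : ℤ) ≤ t) : bz N t = 0 := by
  rw [bz, dif_neg]; omega

/-- **The classical type representation `T_l` of `U'_q(so_3)`.**  For real `q > 1` and a
nonnegative half-integer `l = lam/2`, the operators on the `(2l+1)`-dimensional space given by
`J₁ |l,m⟩ = i [m] |l,m⟩` and `J₂ |l,m⟩ = A_{l,m} |l,m+1⟩ - A_{l,m-1} |l,m-1⟩`
satisfy the `U'_q(so_3)` relations. -/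
theorem stmt_9 (q : ℝ) (hq : 1 < q) (lam : ℕ)
    (J₁ J₂ : Module.End ℂ (Fin (lam + 1) → ℂ))
    (hJ₁ : ∀ t : ℤ, 0 ≤ t → t ≤ lam →
      J₁ (bz (lam + 1) t)
        = (Complex.I * (qn q ((t : ℝ) - (lam : ℝ) / 2) : ℂ)) • bz (lam + 1) t)
    (hJ₂ : ∀ t : ℤ, 0 ≤ t → t ≤ lam →
      J₂ (bz (lam + 1) t)
        = (AA q ((lam : ℝ) / 2) ((t : ℝ) - (lam : ℝ) / 2) : ℂ) • bz (lam + 1) (t + 1)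
          - (AA q ((lam : ℝ) / 2) ((t : ℝ) - (lam : ℝ) / 2 - 1) : ℂ) • bz (lam + 1) (t - 1)) :
    (J₁ ^ 2 * J₂ + J₂ * J₁ ^ 2 - ((q + q⁻¹ : ℝ) : ℂ) • (J₁ * J₂ * J₁) = -J₂) ∧
    (J₂ ^ 2 * J₁ + J₁ * J₂ ^ 2 - ((q + q⁻¹ : ℝ) : ℂ) • (J₂ * J₁ * J₂) = -J₁) := by
  -- extended action formulas, valid for every integer index
  have h1 : ∀ t : ℤ, J₁ (bz (lam + 1) t) = Cz q lam t • bz (lam + 1) t := by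
    intro t
    by_cases h : 0 ≤ t ∧ t ≤ lam
    · simpa [Cz] using hJ₁ t h.1 h.2
    · rw [bz_out (by omega), map_zero, smul_zero]
  have h2 : ∀ t : ℤ, J₂ (bz (lam + 1) t)
      = Az q lam t • bz (lam + 1) (t + 1)
        - Az q lam (t - 1) • bz (lam + 1) (t - 1) := by
    intro t
    by_cases h : 0 ≤ t ∧ t ≤ lam
    · rw [hJ₂ t h.1 h.2]
      simp only [Az]
      rw [show ((t - 1 : ℤ) : ℝ) - (lam : ℝ)/2 = (t : ℝ) - (lam : ℝ)/2 - 1 by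
        push_cast; ring]
    · by_cases hm : t = -1
      · subst hm
        rw [bz_out (by omega), map_zero, show (-1 : ℤ) - 1 = -2 by ring,
          bz_out (N := lam + 1) (t := -2) (by omega), smul_zero, sub_zero,
          show Az q lam (-1) = 0 from ?_, zero_smul]
        exact congrArg _ (uq3_AA_zero_right (by push_cast; ring))
      · by_cases hp : t = lam + 1
        · subst hp
          rw [bz_out (by omega), map_zero,
            bz_out (N := lam + 1) (t := (lam : ℤ) + 1 + 1) (by omega),
            smul_zero, zero_sub,
            show Az q lam ((lam : ℤ) + 1 - 1) = 0 from ?_, zero_smul, neg_zero]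
          exact congrArg _ (uq3_AA_zero_left (by push_cast; ring))
        · rw [bz_out (by omega), map_zero, bz_out (t := t + 1) (by omega),
            bz_out (t := t - 1) (by omega), smul_zero, smul_zero, sub_zero]
  constructor
  · -- first relation
    refine Module.Basis.ext (Pi.basisFun ℂ (Fin (lam + 1))) fun i => ?_
    have hb : (Pi.basisFun ℂ (Fin (lam + 1))) i = bz (lam + 1) (i : ℤ) := by
      rw [bz_coe]; simp
    rw [hb]
    set t : ℤ := (i : ℤ) with ht
    have KCa := uq3_KC hq lam t
    have KCb := uq3_KC hq lam (t - 1)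
    rw [show t - 1 + 1 = t by ring] at KCb
    simp only [pow_two, LinearMap.add_apply, LinearMap.sub_apply,
      LinearMap.smul_apply, Module.End.mul_apply, LinearMap.neg_apply,
      h1, h2, map_sub, map_smul, smul_sub, smul_smul]
    match_scalars
    · linear_combination (norm := (push_cast; ring1)) Az q lam t * KCa
    · linear_combination (norm := (push_cast; ring1)) (-(Az q lam (t - 1))) * KCb
  · -- second relation
    refine Module.Basis.ext (Pi.basisFun ℂ (Fin (lam + 1))) fun i => ?_
    have hb : (Pi.basisFun ℂ (Fin (lam + 1))) i = bz (lam + 1) (i : ℤ) := by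
      rw [bz_coe]; simp
    rw [hb]
    set t : ℤ := (i : ℤ) with ht
    have KC2a := uq3_KC2 hq lam t
    have KC2b := uq3_KC2 hq lam (t - 2)
    rw [show t - 2 + 2 = t by ring, show t - 2 + 1 = t - 1 by ring] at KC2b
    have KAa := uq3_KA hq lam t (by omega) (by omega)
    simp only [pow_two, LinearMap.add_apply, LinearMap.sub_apply,
      LinearMap.smul_apply, Module.End.mul_apply, LinearMap.neg_apply,
      h1, h2, map_sub, map_smul, smul_sub, smul_smul,
      show t + 1 + 1 = t + 2 by ring, show t + 1 - 1 = t by ring,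
      show t - 1 + 1 = t by ring, show t - 1 - 1 = t - 2 by ring]
    match_scalars
    · linear_combination (norm := (push_cast; ring1)) Az q lam t * Az q lam (t + 1) * KC2a
    · linear_combination (norm := (push_cast; ring1)) (-1 : ℂ) * KAa
    · linear_combination (norm := (push_cast; ring1)) Az q lam (t - 1) * Az q lam (t - 2) * KC2b
end

section
/- Let q be a real number with q > 1, let ε₂ ∈ {+1, −1}, and let m be a positive half-odd-integer (m ∈ {1/2, 3/2, 5/2, …}). Define [a]₊ := (q^a + q^{−a})/(q − q⁻¹) (real powers of q). Let M be the linear endomorphism of ℂ² (standard basis e₁, e₂) given by M e₁ = ε₂ q [m]₊ e₁ − q^{1/2} e₂ and M e₂ = ε₂ q⁻¹ [m]₊ e₂ + q^{−1/2} e₁. Then the vectors v₊ := −ε₂ q^{−1/2+m} e₁ + e₂ and v₋ := −ε₂ q^{−1/2−m} e₁ + e₂ form a basis of ℂ² and satisfy M v₊ = ε₂ [m+1]₊ v₊ and M v₋ = ε₂ [m−1]₊ v₋. Consequently the tensor product of the vector representation of U′_q(so_2) with the nonclassical type representation T_{ε₂,m} decomposes as T_{ε₂,m+1} ⊕ T_{ε₂,m−1}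 for m ≥ 3/2, and as T_{ε₂,3/2} ⊕ T_{ε₂,1/2} for m = 1/2 (since [−1/2]₊ = [1/2]₊). -/
/-- The `q`-number `[a]₊ = (q^a + q^{-a})/(q - q⁻¹)` (real powers of `q`). -/
noncomputable def qnp (q a : ℝ) : ℝ := (q ^ a + q ^ (-a)) / (q - q⁻¹)

lemma qnp_neg (q a : ℝ) : qnp q (-a) = qnp q a := by
  rw [qnp, qnp, neg_neg, add_comm]

lemma sub_inv_ne_zero_of_ne_one {q : ℝ} (hq₀ : 0 < q) (hq₁ : q ≠ 1) : q - q⁻¹ ≠ 0 := by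
  intro h
  have : (q - 1) * (q + 1) = 0 := by
    field_simp at h
    linear_combination h
  rcases mul_eq_zero.1 this with h | h
  · exact hq₁ (sub_eq_zero.1 h)
  · linarith

section
variable {q : ℝ} (hq₀ : 0 < q) (hq₁ : q ≠ 1) (a : ℝ)
include hq₀ hq₁

lemma qnp_add_one : qnp q (a + 1) = q ^ a + q⁻¹ * qnp q a := by
  have hd := sub_inv_ne_zero_of_ne_one hq₀ hq₁
  rw [qnp, qnp, mul_div_assoc', add_div' _ _ _ hd, div_left_inj' hd, neg_add,
    Real.rpow_add hq₀, Real.rpow_add hq₀, Real.rpow_neg hq₀.le, Real.rpow_one, Real.rpow_neg_one]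
  ring

lemma qnp_add_one_eq_mul_sub : qnp q (a + 1) = q * qnp q a - q ^ (-a) := by
  have hd := sub_inv_ne_zero_of_ne_one hq₀ hq₁
  rw [qnp, qnp, mul_div_assoc', div_sub' hd, div_left_inj' hd, neg_add,
    Real.rpow_add hq₀, Real.rpow_add hq₀, Real.rpow_one, Real.rpow_neg_one]
  ring
end

lemma apply_eq_qnp_add_one_smul {V : Type*} [AddCommGroup V] [Module ℂ V] (M : Module.End ℂ V)
    {x y : V} {q ε a : ℝ} (hq₀ : 0 < q) (hq₁ : q ≠ 1) (hε : ε ^ 2 = 1)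
    (hx : M x = ((ε * q * qnp q a : ℝ) : ℂ) • x + (-((q ^ (1 / 2 : ℝ) : ℝ) : ℂ)) • y)
    (hy : M y = ((ε * q⁻¹ * qnp q a : ℝ) : ℂ) • y + ((q ^ (-(1 / 2) : ℝ) : ℝ) : ℂ) • x) :
    M (((-ε * q ^ (-(1 / 2 : ℝ) + a) : ℝ) : ℂ) • x + y)
      = ((ε * qnp q (a + 1) : ℝ) : ℂ) • (((-ε * q ^ (-(1 / 2 : ℝ) + a) : ℝ) : ℂ) • x + y) := by
  have hs : q ^ (-(1 / 2) : ℝ) * q ^ (1 / 2 : ℝ) = 1 := by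
    rw [← Real.rpow_add hq₀]; norm_num
  have ht : q ^ a * q ^ (-a) = 1 := by
    rw [← Real.rpow_add hq₀]; norm_num
  have hx_coeff : -ε * q ^ (-(1 / 2 : ℝ) + a) * (ε * q * qnp q a) + q ^ (-(1 / 2) : ℝ)
      = ε * qnp q (a + 1) * (-ε * q ^ (-(1 / 2 : ℝ) + a)) := by
    rw [qnp_add_one_eq_mul_sub hq₀ hq₁, Real.rpow_add hq₀]
    linear_combination (-q ^ (-(1 / 2) : ℝ)) * hε - ε ^ 2 * q ^ (-(1 / 2) : ℝ) * ht
  have hy_coeff : -ε * q ^ (-(1 / 2 : ℝ) + a) * -q ^ (1 / 2 : ℝ) + ε * q⁻¹ * qnp q a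
      = ε * qnp q (a + 1) := by
    rw [qnp_add_one hq₀ hq₁, Real.rpow_add hq₀]
    linear_combination ε * q ^ a * hs
  rw [map_add, map_smul, hx, hy]
  match_scalars <;> simp only [mul_one]
  · exact_mod_cast hx_coeff
  · exact_mod_cast hy_coeff

lemma LinearIndependent.pair_smul_add {K V : Type*} [Field K] [AddCommGroup V] [Module K V]
    {x y : V} (h : LinearIndependent K ![x, y]) {c₁ c₂ : K} (hc : c₁ ≠ c₂) :
    LinearIndependent K ![c₁ • x + y, c₂ • x + y] := by
  rw [LinearIndependent.pair_iff] at h ⊢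
  intro s t hst
  obtain ⟨hx, hy⟩ := h (s * c₁ + t * c₂) (s + t) (by rw [← hst]; module)
  have hs : s * (c₁ - c₂) = 0 := by linear_combination hx - c₂ * hy
  have hs0 : s = 0 := (mul_eq_zero.1 hs).resolve_right (sub_ne_zero.2 hc)
  exact ⟨hs0, by linear_combination hy - hs0⟩

lemma linearIndependent_e2 : LinearIndependent ℂ ![e2 0, e2 1] := by
  rw [LinearIndependent.pair_iff]
  intro s t h
  exact ⟨by simpa [e2] using congrFun h 0, by simpa [e2] using congrFun h 1⟩

/-- **Decomposition of the vector ⊗ nonclassical-type representation of `U'_q(so_2)`.**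
For real `q > 1`, `ε₂ = ±1` and a positive half-odd-integer `m = μ/2` (`μ` odd), let `M` be
the tensor-product action `T⊗(I_{21})` on `ℂ²`: `M e₁ = ε₂ q [m]₊ e₁ - q^{1/2} e₂`,
`M e₂ = ε₂ q⁻¹ [m]₊ e₂ + q^{-1/2} e₁`.  Then `v₊ = -ε₂ q^{-1/2+m} e₁ + e₂` and
`v₋ = -ε₂ q^{-1/2-m} e₁ + e₂` form a basis of `ℂ²` and satisfy `M v₊ = ε₂ [m+1]₊ v₊`,
`M v₋ = ε₂ [m-1]₊ v₋`; hence `T_𝟏 ⊗ T_{ε₂,m} = T_{ε₂,m+1} ⊕ T_{ε₂,m-1}` for `m ≥ 3/2` and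
`T_𝟏 ⊗ T_{ε₂,1/2} = T_{ε₂,3/2} ⊕ T_{ε₂,1/2}` (since `[-1/2]₊ = [1/2]₊`). -/
theorem stmt_12 (q : ℝ) (hq : 1 < q) (ε₂ : ℝ) (hε₂ : ε₂ = 1 ∨ ε₂ = -1)
    (μ : ℕ) (hμ : Odd μ)
    (M : Module.End ℂ (Fin 2 → ℂ))
    (hM1 : M (e2 0) = ((ε₂ * q * qnp q ((μ : ℝ) / 2) : ℝ) : ℂ) • e2 0
      + (-((q ^ (1 / 2 : ℝ) : ℝ) : ℂ)) • e2 1)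
    (hM2 : M (e2 1) = ((ε₂ * q⁻¹ * qnp q ((μ : ℝ) / 2) : ℝ) : ℂ) • e2 1
      + ((q ^ (-(1 / 2) : ℝ) : ℝ) : ℂ) • e2 0) :
    LinearIndependent ℂ
      ![((-ε₂ * q ^ (-(1 / 2 : ℝ) + (μ : ℝ) / 2) : ℝ) : ℂ) • e2 0 + e2 1,
        ((-ε₂ * q ^ (-(1 / 2 : ℝ) - (μ : ℝ) / 2) : ℝ) : ℂ) • e2 0 + e2 1] ∧
    Submodule.span ℂ
      {((-ε₂ * q ^ (-(1 / 2 : ℝ) + (μ : ℝ) / 2) : ℝ) : ℂ) • e2 0 + e2 1,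
       ((-ε₂ * q ^ (-(1 / 2 : ℝ) - (μ : ℝ) / 2) : ℝ) : ℂ) • e2 0 + e2 1}
      = (⊤ : Submodule ℂ (Fin 2 → ℂ)) ∧
    M (((-ε₂ * q ^ (-(1 / 2 : ℝ) + (μ : ℝ) / 2) : ℝ) : ℂ) • e2 0 + e2 1)
      = ((ε₂ * qnp q ((μ : ℝ) / 2 + 1) : ℝ) : ℂ) •
          (((-ε₂ * q ^ (-(1 / 2 : ℝ) + (μ : ℝ) / 2) : ℝ) : ℂ) • e2 0 + e2 1) ∧
    M (((-ε₂ * q ^ (-(1 / 2 : ℝ) - (μ : ℝ) / 2) : ℝ) : ℂ) • e2 0 + e2 1)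
      = ((ε₂ * qnp q ((μ : ℝ) / 2 - 1) : ℝ) : ℂ) •
          (((-ε₂ * q ^ (-(1 / 2 : ℝ) - (μ : ℝ) / 2) : ℝ) : ℂ) • e2 0 + e2 1) := by
  have hq₀ : 0 < q := one_pos.trans hq
  have hε : ε₂ ^ 2 = 1 := by rcases hε₂ with rfl | rfl <;> norm_num
  have hm : (μ : ℝ) / 2 ≠ 0 := by have := hμ.pos; positivity
  set m := (μ : ℝ) / 2
  have hne : -ε₂ * q ^ (-(1 / 2 : ℝ) + m) ≠ -ε₂ * q ^ (-(1 / 2 : ℝ) - m) := by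
    have hε0 : -ε₂ ≠ 0 := neg_ne_zero.2 (by rintro rfl; norm_num at hε)
    rw [Ne, mul_right_inj' hε0, Real.rpow_right_inj hq₀ hq.ne']
    intro h
    exact hm (by linarith)
  have hli := linearIndependent_e2.pair_smul_add (Complex.ofReal_injective.ne hne)
  refine ⟨hli, ?_, apply_eq_qnp_add_one_smul M hq₀ hq.ne' hε hM1 hM2, ?_⟩
  · rw [← Matrix.range_cons_cons_empty]
    exact hli.span_eq_top_of_card_eq_finrank (by simp)
  · rw [← qnp_neg] at hM1 hM2
    rw [sub_eq_add_neg _ m, ← qnp_neg q (m - 1), neg_sub, sub_eq_neg_add 1 m]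
    exact apply_eq_qnp_add_one_smul M hq₀ hq.ne' hε hM1 hM2
end
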